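/- arXiv:2307.13052 — 2 statements merged into one kernel-verified Lean document; each statement's English description precedes it below -/
import Mathlib

section
/- The series S(β₀,α,β;n) = Σ_{k=1}^{n−1} (1+|n−2k|)^{−(1+2β₀)} k^{−α} (n−k)^{−β} is bounded uniformly in n (i.e. sup over n ≥ 2 is finite) provided α+β+2β₀ > 0, α+β ≥ 0, 1+2β₀ ≥ 0, α+1+2β₀ ≥ 0, and β+1+2β₀ ≥ 0. -/
open Finset Real

/-- Pointwise bound, case `A ≤ A'`. -/
lemma ptbound (α β β₀ : ℝ) (h2 : 0 ≤ α + β) (h3 : 0 ≤ 1 + 2*β₀) (h5 : 0 ≤ β + 1 + 2*β₀)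
    (A A' : ℝ) (hA : 1 ≤ A) (hA' : 1 ≤ A') (hle : A ≤ A') :
    (1 + (A' - A)) ^ (-(1+2*β₀)) * A ^ (-α) * A' ^ (-β)
      ≤ 2 ^ |β| * (min A (1 + (A' - A))) ^ (-(α+(β+1+2*β₀))) := by
  set B : ℝ := 1 + (A' - A) with hB
  have hB1 : 1 ≤ B := by simp [hB]; linarith
  have hApos : 0 < A := by linarith
  have hBpos : 0 < B := by linarith
  have hmax : max A B ≤ A' := max_le hle (by simp only [hB]; linarith)
  have hmaxpos : 0 < max A B := lt_of_lt_of_le hApos (le_max_left _ _)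
  have h2le : A' ≤ 2 * max A B := by
    rcases le_total A B with h | h
    · simp [max_eq_right h]; simp [hB] at *; linarith
    · simp [max_eq_left h]; simp [hB] at *; linarith
  -- step 1 : A'^{-β} ≤ 2^{|β|} (max A B)^{-β}
  have step1 : A' ^ (-β) ≤ 2 ^ |β| * (max A B) ^ (-β) := by
    rcases le_total 0 β with hb | hb
    · have h1 : A' ^ (-β) ≤ (max A B) ^ (-β) :=
        Real.rpow_le_rpow_of_nonpos hmaxpos hmax (by linarith)
      have h2' : (1:ℝ) ≤ 2 ^ |β| := Real.one_le_rpow one_le_two (abs_nonneg β)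
      nlinarith [Real.rpow_nonneg hmaxpos.le (-β)]
    · have habs : |β| = -β := abs_of_nonpos hb
      calc A' ^ (-β) ≤ (2 * max A B) ^ (-β) :=
            Real.rpow_le_rpow (by linarith) h2le (by linarith)
        _ = 2 ^ (-β) * (max A B) ^ (-β) := Real.mul_rpow (by norm_num) hmaxpos.le
        _ = 2 ^ |β| * (max A B) ^ (-β) := by rw [habs]
  have key : B ^ (-(1+2*β₀)) * A ^ (-α) * A' ^ (-β)
      ≤ 2 ^ |β| * (B ^ (-(1+2*β₀)) * A ^ (-α) * (max A B) ^ (-β)) := by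
    have hnn : 0 ≤ B ^ (-(1+2*β₀)) * A ^ (-α) :=
      mul_nonneg (Real.rpow_nonneg hBpos.le _) (Real.rpow_nonneg hApos.le _)
    calc B ^ (-(1+2*β₀)) * A ^ (-α) * A' ^ (-β)
        ≤ B ^ (-(1+2*β₀)) * A ^ (-α) * (2 ^ |β| * (max A B) ^ (-β)) :=
          mul_le_mul_of_nonneg_left step1 hnn
      _ = 2 ^ |β| * (B ^ (-(1+2*β₀)) * A ^ (-α) * (max A B) ^ (-β)) := by ring
  refine key.trans (mul_le_mul_of_nonneg_left ?_ (Real.rpow_nonneg (by norm_num) _))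
  rcases le_total A B with h | h
  · -- min = A, max = B
    rw [min_eq_left h, max_eq_right h]
    calc B ^ (-(1+2*β₀)) * A ^ (-α) * B ^ (-β)
        = A ^ (-α) * B ^ (-(β+1+2*β₀)) := by
          rw [show (-(β+1+2*β₀)) = (-(1+2*β₀)) + (-β) from by ring, Real.rpow_add hBpos]; ring
      _ ≤ A ^ (-α) * A ^ (-(β+1+2*β₀)) := by
          refine mul_le_mul_of_nonneg_left ?_ (Real.rpow_nonneg hApos.le _)
          exact Real.rpow_le_rpow_of_nonpos hApos h (by linarith)
      _ = A ^ (-(α+(β+1+2*β₀))) := by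
          rw [show (-(α+(β+1+2*β₀))) = (-α) + (-(β+1+2*β₀)) from by ring, Real.rpow_add hApos]
  · -- min = B, max = A
    rw [min_eq_right h, max_eq_left h]
    calc B ^ (-(1+2*β₀)) * A ^ (-α) * A ^ (-β)
        = B ^ (-(1+2*β₀)) * A ^ (-(α+β)) := by
          rw [show (-(α+β)) = (-α) + (-β) from by ring, Real.rpow_add hApos]; ring
      _ ≤ B ^ (-(1+2*β₀)) * B ^ (-(α+β)) := by
          refine mul_le_mul_of_nonneg_left ?_ (Real.rpow_nonneg hBpos.le _)
          exact Real.rpow_le_rpow_of_nonpos hBpos h (by linarith)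
      _ = B ^ (-(α+(β+1+2*β₀))) := by
          rw [show (-(α+(β+1+2*β₀))) = (-(1+2*β₀)) + (-(α+β)) from by ring, Real.rpow_add hBpos]

/-- The series
`S(β₀,α,β;n) = Σ_{k=1}^{n−1} (1+|n−2k|)^{−(1+2β₀)} k^{−α} (n−k)^{−β}`
is bounded uniformly in `n ≥ 2` provided `α+β+2β₀ > 0`, `α+β ≥ 0`, `1+2β₀ ≥ 0`,
`α+1+2β₀ ≥ 0`, and `β+1+2β₀ ≥ 0`. -/
theorem stmt2 (α β β₀ : ℝ) (h1 : 0 < α + β + 2 * β₀) (h2 : 0 ≤ α + β)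
    (h3 : 0 ≤ 1 + 2 * β₀) (h4 : 0 ≤ α + 1 + 2 * β₀) (h5 : 0 ≤ β + 1 + 2 * β₀) :
    ∃ C : ℝ, ∀ n : ℕ, 2 ≤ n →
      (∑ k ∈ Finset.Ico 1 n,
        (1 + |(n : ℝ) - 2 * k|) ^ (-(1 + 2 * β₀)) * (k : ℝ) ^ (-α) *
          ((n : ℝ) - k) ^ (-β)) ≤ C := by
  set p : ℝ := -(1 + (α + β + 2 * β₀)) with hp
  have hsum : Summable (fun v : ℕ => (v : ℝ) ^ p) :=
    Real.summable_nat_rpow.2 (by simp [hp]; linarith)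
  set C₀ : ℝ := 2 ^ |α| + 2 ^ |β| with hC₀
  have hC₀nn : 0 ≤ C₀ := by positivity
  have hgnn : ∀ v : ℕ, 0 ≤ (v : ℝ) ^ p := fun v => Real.rpow_nonneg (Nat.cast_nonneg v) p
  refine ⟨C₀ * (4 * ∑' v : ℕ, (v : ℝ) ^ p), fun n hn => ?_⟩
  set m : ℕ → ℕ := fun k => min (min k (n - k)) (1 + ((n:ℤ) - 2*k).natAbs) with hm
  have step1 : (∑ k ∈ Finset.Ico 1 n,
        (1 + |(n : ℝ) - 2 * k|) ^ (-(1 + 2 * β₀)) * (k : ℝ) ^ (-α) *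
          ((n : ℝ) - k) ^ (-β)) ≤ ∑ k ∈ Finset.Ico 1 n, C₀ * ((m k : ℝ)) ^ p := by
    refine Finset.sum_le_sum fun k hk => ?_
    rw [Finset.mem_Ico] at hk
    obtain ⟨hk1, hkn⟩ := hk
    have hA : (1:ℝ) ≤ (k:ℝ) := by exact_mod_cast hk1
    have hA' : (1:ℝ) ≤ (n:ℝ) - k := by
      have : (k:ℝ) + 1 ≤ n := by exact_mod_cast hkn
      linarith
    have hcast : ((m k : ℕ) : ℝ) = min (min (k:ℝ) ((n:ℝ)-k)) (1 + |(n:ℝ) - 2*k|) := by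
      have h1 : ((n - k : ℕ) : ℝ) = (n:ℝ) - k := by
        push_cast [Nat.cast_sub hkn.le]; ring
      have h2 : ((((n:ℤ) - 2*k).natAbs : ℕ) : ℝ) = |(n:ℝ) - 2*(k:ℝ)| := by
        rw [Nat.cast_natAbs, Int.cast_abs]; push_cast; ring_nf
      simp only [hm, Nat.cast_min, Nat.cast_add, Nat.cast_one, h1, h2]
    rcases le_total (k:ℝ) ((n:ℝ)-k) with hle | hle
    · have habs : |(n:ℝ) - 2*k| = ((n:ℝ)-k) - k := by
        rw [abs_of_nonneg (by linarith)]; ring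
      have := ptbound α β β₀ h2 h3 h5 (k:ℝ) ((n:ℝ)-k) hA hA' hle
      rw [hcast, habs, min_eq_left hle]
      calc (1 + (((n:ℝ)-k) - k)) ^ (-(1 + 2 * β₀)) * (k : ℝ) ^ (-α) * ((n : ℝ) - k) ^ (-β)
          ≤ 2 ^ |β| * (min (k:ℝ) (1 + (((n:ℝ)-k) - k))) ^ (-(α+(β+1+2*β₀))) := this
        _ ≤ C₀ * (min (k:ℝ) (1 + (((n:ℝ)-k) - k))) ^ p := by
            have hpe : -(α+(β+1+2*β₀)) = p := by rw [hp]; ring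
            rw [hpe]
            refine mul_le_mul_of_nonneg_right ?_ (Real.rpow_nonneg (le_min (by linarith) (by linarith)) p)
            rw [hC₀]; exact le_add_of_nonneg_left (by positivity)
    · have habs : |(n:ℝ) - 2*k| = k - ((n:ℝ)-k) := by
        rw [abs_of_nonpos (by linarith)]; ring
      have := ptbound β α β₀ (by linarith) h3 (by linarith) ((n:ℝ)-k) (k:ℝ) hA' hA hle
      rw [hcast, habs, min_eq_right hle]
      calc (1 + ((k:ℝ) - ((n:ℝ)-k))) ^ (-(1 + 2 * β₀)) * (k : ℝ) ^ (-α) * ((n : ℝ) - k) ^ (-β)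
          = (1 + ((k:ℝ) - ((n:ℝ)-k))) ^ (-(1 + 2 * β₀)) * ((n:ℝ)-k) ^ (-β) * (k:ℝ) ^ (-α) := by ring
        _ ≤ 2 ^ |α| * (min ((n:ℝ)-k) (1 + ((k:ℝ) - ((n:ℝ)-k)))) ^ (-(β+(α+1+2*β₀))) := this
        _ ≤ C₀ * (min ((n:ℝ)-k) (1 + ((k:ℝ) - ((n:ℝ)-k)))) ^ p := by
            have hpe : -(β+(α+1+2*β₀)) = p := by rw [hp]; ring
            rw [hpe]
            refine mul_le_mul_of_nonneg_right ?_ (Real.rpow_nonneg (le_min (by linarith) (by linarith)) p)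
            rw [hC₀]; exact le_add_of_nonneg_right (by positivity)
  refine step1.trans ?_
  rw [← Finset.mul_sum]
  refine mul_le_mul_of_nonneg_left ?_ hC₀nn
  rw [Finset.sum_comp (fun v : ℕ => (v : ℝ) ^ p) m]
  have card4 : ∀ v ∈ (Finset.Ico 1 n).image m,
      #{k ∈ Finset.Ico 1 n | m k = v} ≤ 4 := by
    intro v _
    have hsub : {k ∈ Finset.Ico 1 n | m k = v} ⊆
        ({v, n - v, (n + 1 - v)/2, (n - 1 + v)/2} : Finset ℕ) := by
      intro k hk
      simp only [Finset.mem_filter, Finset.mem_Ico] at hk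
      simp only [Finset.mem_insert, Finset.mem_singleton]
      simp only [hm] at hk
      omega
    calc #{k ∈ Finset.Ico 1 n | m k = v}
        ≤ #({v, n - v, (n + 1 - v)/2, (n - 1 + v)/2} : Finset ℕ) := Finset.card_le_card hsub
      _ ≤ 4 := by
          refine (Finset.card_insert_le _ _).trans ?_
          refine Nat.succ_le_succ ?_
          refine (Finset.card_insert_le _ _).trans ?_
          refine Nat.succ_le_succ ?_
          exact (Finset.card_insert_le _ _).trans (by simp)
  calc ∑ v ∈ (Finset.Ico 1 n).image m, #{k ∈ Finset.Ico 1 n | m k = v} • ((v:ℝ) ^ p)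
      ≤ ∑ v ∈ (Finset.Ico 1 n).image m, 4 * ((v:ℝ) ^ p) := by
        refine Finset.sum_le_sum fun v hv => ?_
        rw [nsmul_eq_mul]
        exact mul_le_mul_of_nonneg_right (by exact_mod_cast card4 v hv) (hgnn v)
    _ = 4 * ∑ v ∈ (Finset.Ico 1 n).image m, ((v:ℝ) ^ p) := by rw [Finset.mul_sum]
    _ ≤ 4 * ∑' v : ℕ, (v : ℝ) ^ p := by
        refine mul_le_mul_of_nonneg_left ?_ (by norm_num)
        exact Summable.sum_le_tsum _ (fun v _ => hgnn v) hsum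
end

section
/- If sup over n ≥ 2 of S(β₀,α,β;n) = Σ_{k=1}^{n−1} (1+|n−2k|)^{−(1+2β₀)} k^{−α} (n−k)^{−β} is finite, then necessarily α+β ≥ 0, α+1+2β₀ ≥ 0, and β+1+2β₀ ≥ 0. -/
open Finset Filter

private lemma key_bound {t C : ℝ} (h : ∀ m : ℕ, 1 ≤ m → ((m : ℝ)) ^ t ≤ C) : t ≤ 0 := by
  by_contra ht
  push_neg at ht
  have h1 : Tendsto (fun m : ℕ => ((m : ℝ)) ^ t) atTop atTop :=
    (tendsto_rpow_atTop ht).comp tendsto_natCast_atTop_atTop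
  obtain ⟨m, hm⟩ := ((h1.eventually_gt_atTop C).and (eventually_ge_atTop 1)).exists
  exact absurd (h m hm.2) (not_le.mpr hm.1)

/-- If `sup_{n ≥ 2} S(β₀,α,β;n)` is finite, where
`S(β₀,α,β;n) = Σ_{k=1}^{n−1} (1+|n−2k|)^{−(1+2β₀)} k^{−α} (n−k)^{−β}`,
then necessarily `α+β ≥ 0`, `α+1+2β₀ ≥ 0`, and `β+1+2β₀ ≥ 0`. -/
theorem stmt3 (α β β₀ : ℝ)
    (h : ∃ C : ℝ, ∀ n : ℕ, 2 ≤ n →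
      (∑ k ∈ Finset.Ico 1 n,
        (1 + |(n : ℝ) - 2 * k|) ^ (-(1 + 2 * β₀)) * (k : ℝ) ^ (-α) *
          ((n : ℝ) - k) ^ (-β)) ≤ C) :
    0 ≤ α + β ∧ 0 ≤ α + 1 + 2 * β₀ ∧ 0 ≤ β + 1 + 2 * β₀ := by
  obtain ⟨C, hC⟩ := h
  have hterm : ∀ n : ℕ, 2 ≤ n → ∀ k ∈ Finset.Ico 1 n,
      (1 + |(n : ℝ) - 2 * k|) ^ (-(1 + 2 * β₀)) * (k : ℝ) ^ (-α) *
        ((n : ℝ) - k) ^ (-β) ≤ C := by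
    intro n hn k hk
    refine le_trans (Finset.single_le_sum (f := fun k : ℕ => (1 + |(n : ℝ) - 2 * k|) ^ (-(1 + 2 * β₀)) * (k : ℝ) ^ (-α) * ((n : ℝ) - k) ^ (-β)) (fun j hj => ?_) hk) (hC n hn)
    have hj' := Finset.mem_Ico.mp hj
    have hjn : (0:ℝ) ≤ (n : ℝ) - j := by
      have : (j:ℝ) ≤ n := by exact_mod_cast hj'.2.le
      linarith
    exact mul_nonneg (mul_nonneg (Real.rpow_nonneg (by positivity) _)
      (Real.rpow_nonneg (Nat.cast_nonneg j) _)) (Real.rpow_nonneg hjn _)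
  have g1 : 0 ≤ α + β := by
    have hk := key_bound (t := -(α + β)) (C := C) ?_
    · linarith
    intro m hm
    have hm0 : (0:ℝ) < m := by exact_mod_cast hm
    have h2 := hterm (2*m) (by omega) m (Finset.mem_Ico.mpr ⟨hm, by omega⟩)
    have heq : (1 + |((2*m : ℕ) : ℝ) - 2 * m|) ^ (-(1 + 2 * β₀)) * (m : ℝ) ^ (-α) *
        (((2*m : ℕ) : ℝ) - m) ^ (-β) = (m : ℝ) ^ (-(α + β)) := by
      push_cast
      rw [show (2*(m:ℝ) - 2*m) = 0 by ring, abs_zero, add_zero, Real.one_rpow, one_mul,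
        show (2*(m:ℝ) - m) = m by ring, ← Real.rpow_add hm0]
      ring_nf
    rwa [heq] at h2
  have g2 : 0 ≤ α + 1 + 2 * β₀ := by
    have hk := key_bound (t := -(α + 1 + 2 * β₀)) (C := C) ?_
    · linarith
    intro m hm
    have hm0 : (0:ℝ) < m := by exact_mod_cast hm
    have hm1 : (1:ℝ) ≤ m := by exact_mod_cast hm
    have h2 := hterm (m+1) (by omega) m (Finset.mem_Ico.mpr ⟨hm, by omega⟩)
    have heq : (1 + |((m+1 : ℕ) : ℝ) - 2 * m|) ^ (-(1 + 2 * β₀)) * (m : ℝ) ^ (-α) *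
        (((m+1 : ℕ) : ℝ) - m) ^ (-β) = (m : ℝ) ^ (-(α + 1 + 2 * β₀)) := by
      push_cast
      rw [show ((m:ℝ) + 1 - 2*m) = 1 - m by ring, abs_of_nonpos (by linarith),
        show (1 + -(1 - (m:ℝ))) = m by ring,
        show ((m:ℝ) + 1 - m) = 1 by ring, Real.one_rpow, mul_one, ← Real.rpow_add hm0]
      ring_nf
    rwa [heq] at h2
  have g3 : 0 ≤ β + 1 + 2 * β₀ := by
    have hk := key_bound (t := -(β + 1 + 2 * β₀)) (C := C) ?_
    · linarith
    intro m hm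
    have hm0 : (0:ℝ) < m := by exact_mod_cast hm
    have hm1 : (1:ℝ) ≤ m := by exact_mod_cast hm
    have h2 := hterm (m+1) (by omega) 1 (Finset.mem_Ico.mpr ⟨le_refl 1, by omega⟩)
    have heq : (1 + |((m+1 : ℕ) : ℝ) - 2 * (1:ℕ)|) ^ (-(1 + 2 * β₀)) * ((1:ℕ) : ℝ) ^ (-α) *
        (((m+1 : ℕ) : ℝ) - (1:ℕ)) ^ (-β) = (m : ℝ) ^ (-(β + 1 + 2 * β₀)) := by
      push_cast
      rw [show ((m:ℝ) + 1 - 2*1) = -(1 - m) by ring, abs_neg, abs_of_nonpos (by linarith),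
        show (1 + -(1 - (m:ℝ))) = m by ring, Real.one_rpow, mul_one,
        show ((m:ℝ) + 1 - 1) = m by ring, ← Real.rpow_add hm0]
      ring_nf
    rwa [heq] at h2
  exact ⟨g1, g2, g3⟩
end
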